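/- arXiv:1010.2361 — 3 statements merged into one kernel-verified Lean document; each statement's English description precedes it below -/
import Mathlib

section
/- Let ψ₁, ψ₂, ψ₃ be unit vectors in ℂ² and let n₁, n₂, n₃ be natural numbers. Then there exists a unit vector φ ∈ ℂ² such that for every density matrix ρ on ℂ² one has ∏_{j=1}^3 (ψ_j† ρ ψ_j)^{n_j} ≤ ∏_{j=1}^3 |⟨φ, ψ_j⟩|^{2 n_j}; that is, for any pure symmetric multiqubit state with at most three distinct Majorana points, the associated likelihood functional attains its maximum over density matrices at a pure state. -/
open scoped BigOperators ComplexOrder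

/-- The standard Hermitian inner product on `ℂ^d`, conjugate-linear in the
first argument: `⟨φ, ψ⟩ = ∑ i, conj (φ i) * ψ i`. -/
noncomputable def inp {d : ℕ} (φ ψ : Fin d → ℂ) : ℂ :=
  ∑ i, (starRingEnd ℂ) (φ i) * ψ i

/-!
A qubit density matrix is `ρ = (1 + r • σ) / 2` with Bloch vector `r` in the closed unit ball of
`ℝ³`, and `ψ† ρ ψ = (1 + ⟪r, s⟫) / 2` where `s` is the Bloch vector of the unit vector `ψ`. For
`ρ = φ φ†` this is `|⟨φ, ψ⟩|²`, and these `r` fill the unit sphere. So it suffices that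
`r ↦ ∏ j, ((1 + ⟪r, s j⟫) / 2) ^ n j` attains its maximum over the ball on the sphere. With only
three `s j` in `ℝ³` there is a direction `v ≠ 0` with `⟪v, s j⟫ ≥ 0` for all `j` (a common kernel
vector of the functionals `⟪s j, ·⟫`, or a solution of `⟪s j, v⟫ = 1` when they are independent),
and moving from `r` along `v` up to the sphere decreases no factor.
-/

open scoped RealInnerProductSpace
open Module Matrix

section Likelihood

variable {ι E : Type*} [Fintype ι] [NormedAddCommGroup E] [InnerProductSpace ℝ E]

noncomputable def likelihood (s : ι → E) (n : ι → ℕ) (r : E) : ℝ :=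
  ∏ j, ((1 + ⟪r, s j⟫) / 2) ^ n j

theorem continuous_likelihood (s : ι → E) (n : ι → ℕ) : Continuous (likelihood s n) := by
  unfold likelihood
  fun_prop

theorem exists_ne_zero_forall_inner_nonneg [FiniteDimensional ℝ E] [Nontrivial E] (s : ι → E)
    (hcard : Fintype.card ι ≤ finrank ℝ E) : ∃ v ≠ 0, ∀ j, 0 ≤ ⟪v, s j⟫ := by
  let T : E →ₗ[ℝ] ι → ℝ := LinearMap.pi fun j => innerₛₗ ℝ (s j)
  have hT : ∀ v j, T v j = ⟪s j, v⟫ := fun _ _ => rfl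
  by_cases hker : ∃ v, T v = 0 ∧ v ≠ 0
  · obtain ⟨v, hv, hv0⟩ := hker
    exact ⟨v, hv0, fun j => by rw [real_inner_comm, ← hT, hv]; rfl⟩
  push Not at hker
  have hinj : Function.Injective T := (injective_iff_map_eq_zero T).mpr hker
  have hrank : finrank ℝ E = finrank ℝ (ι → ℝ) :=
    (LinearMap.finrank_le_finrank_of_injective hinj).antisymm (by simpa using hcard)
  obtain ⟨v, hv⟩ := (LinearMap.injective_iff_surjective_of_finrank_eq_finrank hrank).mp hinj 1
  refine ⟨v, ?_, fun j => by rw [real_inner_comm, ← hT, hv]; exact zero_le_one⟩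
  rintro rfl
  -- `T 0 = 1` forces `ι` to be empty, hence `E` to be trivial
  have hι : IsEmpty ι := ⟨fun j => one_ne_zero (congrFun (hv.symm.trans (map_zero T)) j)⟩
  rw [finrank_fintype_fun_eq_card, Fintype.card_eq_zero] at hrank
  exact finrank_pos.ne' hrank

theorem exists_nonneg_norm_add_smul_eq_one {r v : E} (hr : ‖r‖ ≤ 1) (hv : v ≠ 0) :
    ∃ t : ℝ, 0 ≤ t ∧ ‖r + t • v‖ = 1 := by
  have hv' : 0 < ‖v‖ := norm_pos_iff.mpr hv
  have hfar : 1 ≤ ‖r + (2 / ‖v‖) • v‖ := by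
    have := norm_sub_norm_le ((2 / ‖v‖) • v) (-r)
    rw [norm_smul, Real.norm_of_nonneg (by positivity), div_mul_cancel₀ _ hv'.ne', norm_neg,
      sub_neg_eq_add, add_comm] at this
    linarith
  obtain ⟨t, ht, hnorm⟩ := intermediate_value_Icc (by positivity : (0 : ℝ) ≤ 2 / ‖v‖)
    (by fun_prop : Continuous fun t : ℝ => ‖r + t • v‖).continuousOn ⟨by simpa using hr, hfar⟩
  exact ⟨t, ht.1, hnorm⟩

theorem likelihood_le_add_smul {s : ι → E} (hs : ∀ j, ‖s j‖ ≤ 1) (n : ι → ℕ) {r v : E}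
    (hr : ‖r‖ ≤ 1) (hv : ∀ j, 0 ≤ ⟪v, s j⟫) {t : ℝ} (ht : 0 ≤ t) :
    likelihood s n r ≤ likelihood s n (r + t • v) := by
  have hbase : ∀ j, 0 ≤ (1 + ⟪r, s j⟫) / 2 := fun j => by
    have := neg_le_of_abs_le <|
      (abs_real_inner_le_norm r (s j)).trans (mul_le_one₀ hr (norm_nonneg _) (hs j))
    linarith
  refine Finset.prod_le_prod (fun j _ => pow_nonneg (hbase j) _)
    fun j _ => pow_le_pow_left₀ (hbase j) ?_ _
  rw [inner_add_left, real_inner_smul_left]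
  linarith [mul_nonneg ht (hv j)]

theorem exists_norm_eq_one_forall_likelihood_le [FiniteDimensional ℝ E] [Nontrivial E]
    {s : ι → E} (hcard : Fintype.card ι ≤ finrank ℝ E) (hs : ∀ j, ‖s j‖ ≤ 1) (n : ι → ℕ) :
    ∃ r₀ : E, ‖r₀‖ = 1 ∧ ∀ r : E, ‖r‖ ≤ 1 → likelihood s n r ≤ likelihood s n r₀ := by
  obtain ⟨r₀, hr₀, hmax⟩ := (isCompact_sphere (0 : E) 1).exists_isMaxOn
    (NormedSpace.sphere_nonempty.mpr zero_le_one) (continuous_likelihood s n).continuousOn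
  refine ⟨r₀, by simpa using hr₀, fun r hr => ?_⟩
  obtain ⟨v, hv0, hv⟩ := exists_ne_zero_forall_inner_nonneg s hcard
  obtain ⟨t, ht, hrt⟩ := exists_nonneg_norm_add_smul_eq_one hr hv0
  exact (likelihood_le_add_smul hs n hr hv ht).trans (hmax (by simpa using hrt))

end Likelihood

theorem Matrix.IsHermitian.exists_eq_of_fin_two {ρ : Matrix (Fin 2) (Fin 2) ℂ}
    (hρ : ρ.IsHermitian) : ∃ (a d : ℝ) (b : ℂ), ρ = !![(a : ℂ), b; star b, d] := by
  refine ⟨(ρ 0 0).re, (ρ 1 1).re, ρ 0 1, ?_⟩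
  ext i j
  fin_cases i <;> fin_cases j
  · exact (Complex.conj_eq_iff_re.mp (hρ.apply 0 0)).symm
  · rfl
  · exact (hρ.apply 1 0).symm
  · exact (Complex.conj_eq_iff_re.mp (hρ.apply 1 1)).symm

-- `ρ = (1 + x σ₁ + y σ₂ + z σ₃) / 2` (Pauli matrices) has `ρ 0 1 = (x - i y) / 2` and
-- `ρ 0 0 - ρ 1 1 = z`.
noncomputable def blochVector (ρ : Matrix (Fin 2) (Fin 2) ℂ) : EuclideanSpace ℝ (Fin 3) :=
  !₂[2 * (ρ 0 1).re, -2 * (ρ 0 1).im, (ρ 0 0).re - (ρ 1 1).re]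

theorem inner_blochVector (ρ σ : Matrix (Fin 2) (Fin 2) ℂ) :
    ⟪blochVector ρ, blochVector σ⟫ = 4 * ((ρ 0 1).re * (σ 0 1).re + (ρ 0 1).im * (σ 0 1).im)
      + ((ρ 0 0).re - (ρ 1 1).re) * ((σ 0 0).re - (σ 1 1).re) := by
  simp only [blochVector, PiLp.inner_apply, RCLike.inner_apply, Real.ringHom_apply,
    Fin.sum_univ_three, cons_val_zero, cons_val_one, cons_val]
  ring

theorem inp_self_eq (ψ : Fin 2 → ℂ) :
    inp ψ ψ = (Complex.normSq (ψ 0) + Complex.normSq (ψ 1) : ℝ) := by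
  simp [inp, Fin.sum_univ_two, Complex.normSq_eq_conj_mul_self]

theorem re_star_dotProduct_mulVec_eq {ρ : Matrix (Fin 2) (Fin 2) ℂ} (hρ : ρ.IsHermitian)
    (htr : ρ.trace = 1) {ψ : Fin 2 → ℂ} (hψ : inp ψ ψ = 1) :
    (star ψ ⬝ᵥ ρ *ᵥ ψ).re
      = (1 + ⟪blochVector ρ, blochVector (vecMulVec ψ (star ψ))⟫) / 2 := by
  obtain ⟨a, d, b, rfl⟩ := hρ.exists_eq_of_fin_two
  have had : a + d = 1 := by simpa [trace_fin_two] using congrArg Complex.re htr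
  have hψ' : Complex.normSq (ψ 0) + Complex.normSq (ψ 1) = 1 := by
    exact_mod_cast (inp_self_eq ψ).symm.trans hψ
  rw [inner_blochVector]
  simp only [Complex.normSq_apply] at hψ'
  simp only [dotProduct, mulVec, vecMulVec, Fin.sum_univ_two, of_apply, cons_val', cons_val_zero,
    cons_val_one, cons_val_fin_one, Pi.star_apply, RCLike.star_def, Complex.add_re, Complex.add_im,
    Complex.mul_re, Complex.mul_im, Complex.conj_re, Complex.conj_im, Complex.ofReal_re,
    Complex.ofReal_im]
  linear_combination ((a + d) / 2) * hψ' + (1 / 2) * had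

theorem norm_blochVector_le {ρ : Matrix (Fin 2) (Fin 2) ℂ} (hρ : ρ.PosSemidef)
    (htr : ρ.trace = 1) : ‖blochVector ρ‖ ≤ 1 := by
  have hdet := hρ.det_nonneg
  obtain ⟨a, d, b, rfl⟩ := hρ.isHermitian.exists_eq_of_fin_two
  have had : a + d = 1 := by simpa [trace_fin_two] using congrArg Complex.re htr
  -- `‖blochVector ρ‖² = 4 |b|² + (a - d)² ≤ 4 a d + (a - d)² = (a + d)²`
  have hb : b.re * b.re + b.im * b.im ≤ a * d := by
    simpa [det_fin_two] using (Complex.le_def.mp hdet).1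
  rw [← sq_le_one_iff₀ (norm_nonneg _), ← real_inner_self_eq_norm_sq, inner_blochVector]
  simp only [of_apply, cons_val', cons_val_zero, cons_val_one, cons_val_fin_one, Complex.ofReal_re]
  nlinarith

theorem sq_norm_inp_eq (φ ψ : Fin 2 → ℂ) :
    ‖inp φ ψ‖ ^ 2 = (star ψ ⬝ᵥ vecMulVec φ (star φ) *ᵥ ψ).re := by
  rw [Complex.sq_norm, Complex.normSq_apply]
  simp only [inp, dotProduct, mulVec, vecMulVec, Fin.sum_univ_two, of_apply, Pi.star_apply,
    RCLike.star_def, Complex.add_re, Complex.add_im, Complex.mul_re, Complex.mul_im,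
    Complex.conj_re, Complex.conj_im]
  ring

theorem trace_vecMulVec_self_star (φ : Fin 2 → ℂ) : (vecMulVec φ (star φ)).trace = inp φ φ := by
  rw [trace_vecMulVec, dotProduct_comm]
  rfl

theorem blochVector_vecMulVec_ofReal_star (p : ℝ) (q : ℂ) :
    blochVector (vecMulVec ![(p : ℂ), q] (star ![(p : ℂ), q]))
      = !₂[2 * p * q.re, 2 * p * q.im, p ^ 2 - Complex.normSq q] := by
  simp [blochVector, vecMulVec_apply, Complex.mul_conj, sq, mul_assoc]

theorem exists_blochVector_vecMulVec_eq_of_norm_eq_one {r : EuclideanSpace ℝ (Fin 3)}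
    (hr : ‖r‖ = 1) :
    ∃ φ : Fin 2 → ℂ, inp φ φ = 1 ∧ blochVector (vecMulVec φ (star φ)) = r := by
  obtain ⟨x, y, z, rfl⟩ : ∃ x y z : ℝ, r = !₂[x, y, z] :=
    ⟨r 0, r 1, r 2, by ext i; fin_cases i <;> rfl⟩
  have h : x ^ 2 + y ^ 2 + z ^ 2 = 1 := by
    simpa [hr, Fin.sum_univ_three] using (EuclideanSpace.real_norm_sq_eq !₂[x, y, z]).symm
  by_cases hz : z = -1
  · refine ⟨![(0 : ℝ), 1], by simp [inp], ?_⟩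
    have hx : x = 0 := by nlinarith
    have hy : y = 0 := by nlinarith
    rw [blochVector_vecMulVec_ofReal_star]
    simp [hx, hy, hz]
  have hz' : 0 < 1 + z := by
    have : -1 ≤ z := by nlinarith
    exact lt_of_le_of_ne (by linarith) (fun h => hz (by linarith))
  -- the unit vector `(1 + z, x + i y) / c`, with `c ^ 2 = 2 (1 + z)`
  set c := Real.sqrt (2 * (1 + z))
  have hc : 0 < c := Real.sqrt_pos.mpr (by linarith)
  have hc2 : c ^ 2 = 2 * (1 + z) := Real.sq_sqrt (by linarith)
  refine ⟨![((1 + z) / c : ℝ), ⟨x / c, y / c⟩], ?_, ?_⟩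
  · rw [inp_self_eq, Complex.ofReal_eq_one]
    simp only [cons_val_zero, cons_val_one, cons_val_fin_one, Complex.normSq_ofReal,
      Complex.normSq_mk]
    field_simp
    rw [hc2]
    linear_combination h
  · rw [blochVector_vecMulVec_ofReal_star]
    simp only [Complex.normSq_mk, WithLp.toLp.injEq, vecCons_inj, and_true]
    field_simp
    rw [hc2]
    exact ⟨by ring, by ring, by linear_combination -h⟩

theorem stmt6 (ψ : Fin 3 → (Fin 2 → ℂ)) (hψ : ∀ j, inp (ψ j) (ψ j) = 1)
    (n : Fin 3 → ℕ) :
    ∃ φ : Fin 2 → ℂ, inp φ φ = 1 ∧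
      ∀ ρ : Matrix (Fin 2) (Fin 2) ℂ, ρ.PosSemidef → ρ.trace = 1 →
        ∏ j, (dotProduct (star (ψ j)) (ρ.mulVec (ψ j))).re ^ (n j)
          ≤ ∏ j, ‖inp φ (ψ j)‖ ^ (2 * n j) := by
  have hpure : ∀ φ : Fin 2 → ℂ, inp φ φ = 1 →
      (vecMulVec φ (star φ)).PosSemidef ∧ (vecMulVec φ (star φ)).trace = 1 := fun φ hφ =>
    ⟨posSemidef_vecMulVec_self_star φ, (trace_vecMulVec_self_star φ).trans hφ⟩
  set s := fun j => blochVector (vecMulVec (ψ j) (star (ψ j)))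
  have hs : ∀ j, ‖s j‖ ≤ 1 := fun j => norm_blochVector_le (hpure _ (hψ j)).1 (hpure _ (hψ j)).2
  obtain ⟨r₀, hr₀, hmax⟩ := exists_norm_eq_one_forall_likelihood_le (by simp) hs n
  obtain ⟨φ, hφ, rfl⟩ := exists_blochVector_vecMulVec_eq_of_norm_eq_one hr₀
  refine ⟨φ, hφ, fun ρ hρ htr => ?_⟩
  calc ∏ j, (star (ψ j) ⬝ᵥ ρ *ᵥ ψ j).re ^ n j
      = likelihood s n (blochVector ρ) := by
        simp only [likelihood, s, re_star_dotProduct_mulVec_eq hρ.isHermitian htr (hψ _)]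
    _ ≤ likelihood s n (blochVector (vecMulVec φ (star φ))) :=
        hmax _ (norm_blochVector_le hρ htr)
    _ = ∏ j, ‖inp φ (ψ j)‖ ^ (2 * n j) := by
        simp only [likelihood, s, pow_mul, sq_norm_inp_eq,
          re_star_dotProduct_mulVec_eq (hpure φ hφ).1.isHermitian (hpure φ hφ).2 (hψ _)]
end

section
/- Let d ≥ 1 and let ψ₁, …, ψ_{d²} be d² unit vectors in ℂ^d satisfying the SIC condition |⟨ψ_j, ψ_k⟩|² = (1 + d·δ_{jk})/(d+1) for all j, k. Then Σ_{j=1}^{d²} ψ_j ψ_j† = d·I; that is, the completeness (resolution of the identity) condition of a SIC POVM is automatically implied by the pairwise-overlap condition. -/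
/-!
Write `S = ∑ ψⱼ ψⱼ†` for `N` unit vectors in `𝕜ⁿ` (`d = card n`) with all overlaps
`|⟨ψⱼ, ψₖ⟩|² = c`, `j ≠ k`. Then `tr S = N` and the frame potential is
`tr S² = ∑ⱼₖ |⟨ψⱼ, ψₖ⟩|² = N + N(N - 1)c`. If these equal `a d` and `a² d`, the Hermitian matrix
`S - a I` satisfies `tr (S - a I)² = 0`, so it vanishes. For a SIC, `N = d²`, `c = 1/(d + 1)`
and `a = d`.
-/

open scoped BigOperators

open scoped ComplexOrder

theorem inp_eq_star_dotProduct {d : ℕ} (φ ψ : Fin d → ℂ) : inp φ ψ = star φ ⬝ᵥ ψ := rfl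

namespace Matrix

variable {𝕜 n ι : Type*} [RCLike 𝕜] [Fintype n] [Fintype ι]

theorem IsHermitian.eq_smul_one_of_trace_of_trace_mul_self [DecidableEq n]
    {A : Matrix n n 𝕜} (hA : A.IsHermitian) (a : ℝ)
    (h₁ : A.trace = a * Fintype.card n) (h₂ : (A * A).trace = a ^ 2 * Fintype.card n) :
    A = (a : 𝕜) • 1 := by
  have hB : (A - (a : 𝕜) • 1).IsHermitian :=
    hA.sub (isHermitian_one.smul (RCLike.conj_ofReal a))
  have htr : ((A - (a : 𝕜) • 1)ᴴ * (A - (a : 𝕜) • 1)).trace = 0 := by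
    rw [hB.eq, sub_mul, mul_sub, mul_sub]
    simp only [trace_sub, smul_mul, Matrix.mul_smul, one_mul, mul_one, trace_smul, trace_one,
      h₁, h₂, smul_eq_mul]
    ring
  exact sub_eq_zero.mp (trace_conjTranspose_mul_self_eq_zero_iff.mp htr)

theorem trace_sum_vecMulVec_star_mul_self (ψ : ι → n → 𝕜) :
    ((∑ j, vecMulVec (ψ j) (star (ψ j))) * ∑ j, vecMulVec (ψ j) (star (ψ j))).trace
      = ∑ j, ∑ k, ((‖star (ψ j) ⬝ᵥ ψ k‖ ^ 2 : ℝ) : 𝕜) := by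
  simp only [Finset.sum_mul_sum, trace_sum, vecMulVec_mul_vecMulVec, trace_vecMulVec,
    dotProduct_smul]
  refine Finset.sum_congr rfl fun j _ => Finset.sum_congr rfl fun k _ => ?_
  rw [smul_eq_mul, dotProduct_star, dotProduct_comm (ψ k), RCLike.star_def, RCLike.mul_conj]
  norm_cast

theorem sum_vecMulVec_star_eq_smul_one_of_equiangular [DecidableEq n] (ψ : ι → n → 𝕜)
    (hunit : ∀ j, star (ψ j) ⬝ᵥ ψ j = 1) {c a : ℝ}
    (hangle : ∀ j k, j ≠ k → ‖star (ψ j) ⬝ᵥ ψ k‖ ^ 2 = c)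
    (hcard : (Fintype.card ι : ℝ) = a * Fintype.card n)
    (hc : 1 + (Fintype.card ι - 1) * c = a) :
    ∑ j, vecMulVec (ψ j) (star (ψ j)) = (a : 𝕜) • 1 := by
  classical
  have hoverlap : ∀ j k, ‖star (ψ j) ⬝ᵥ ψ k‖ ^ 2 = c + if j = k then 1 - c else 0 := by
    intro j k
    split_ifs with h
    · subst h; simp [hunit]
    · simp [hangle j k h]
  have hherm : (∑ j, vecMulVec (ψ j) (star (ψ j))).IsHermitian :=
    isSelfAdjoint_sum _ fun j _ => (posSemidef_vecMulVec_self_star (ψ j)).isHermitian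
  refine hherm.eq_smul_one_of_trace_of_trace_mul_self a ?_ ?_
  · simp only [trace_sum, trace_vecMulVec, dotProduct_comm (ψ _), hunit, Finset.sum_const,
      Finset.card_univ, nsmul_eq_mul, mul_one]
    exact_mod_cast hcard
  · have hpotential : ∑ j, ∑ k, ‖star (ψ j) ⬝ᵥ ψ k‖ ^ 2 = a ^ 2 * Fintype.card n := by
      simp only [hoverlap, Finset.sum_add_distrib, Finset.sum_ite_eq, Finset.mem_univ, if_true,
        Finset.sum_const, Finset.card_univ, nsmul_eq_mul]
      linear_combination (Fintype.card ι : ℝ) * hc + a * hcard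
    rw [trace_sum_vecMulVec_star_mul_self]
    exact_mod_cast hpotential

end Matrix

theorem stmt12_general (d : ℕ)
    (ψ : Fin (d ^ 2) → (Fin d → ℂ)) (hψ : ∀ j, inp (ψ j) (ψ j) = 1)
    (hSIC : ∀ j k, j ≠ k →
      ‖inp (ψ j) (ψ k)‖ ^ 2 = 1 / (d + 1)) :
    ∑ j, Matrix.vecMulVec (ψ j) (star (ψ j))
      = (d : ℂ) • (1 : Matrix (Fin d) (Fin d) ℂ) := by
  simp only [inp_eq_star_dotProduct] at hψ hSIC
  have hcard : (Fintype.card (Fin (d ^ 2)) : ℝ) = d * Fintype.card (Fin d) := by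
    simp [sq]
  have hc : 1 + (Fintype.card (Fin (d ^ 2)) - 1) * (1 / (d + 1) : ℝ) = d := by
    simp only [Fintype.card_fin, Nat.cast_pow]
    field_simp
    ring
  rw [← Complex.ofReal_natCast]
  exact Matrix.sum_vecMulVec_star_eq_smul_one_of_equiangular ψ hψ hSIC hcard hc

theorem stmt12 (d : ℕ) (hd : 1 ≤ d)
    (ψ : Fin (d ^ 2) → (Fin d → ℂ)) (hψ : ∀ j, inp (ψ j) (ψ j) = 1)
    (hSIC : ∀ j k, j ≠ k →
      ‖inp (ψ j) (ψ k)‖ ^ 2 = 1 / (d + 1)) :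
    ∑ j, Matrix.vecMulVec (ψ j) (star (ψ j))
      = (d : ℂ) • (1 : Matrix (Fin d) (Fin d) ℂ) :=
  stmt12_general d ψ hψ hSIC
end

section
/- Let d ≥ 1 and let ψ₁, …, ψ_{d²} be d² unit vectors in ℂ^d forming a SIC POVM, i.e., |⟨ψ_j, ψ_k⟩|² = 1/(d+1) for all j ≠ k. Then for every unit vector φ ∈ ℂ^d one has ∏_{j=1}^{d²} |⟨φ, ψ_j⟩|² ≤ (d+1)^{−(d²−1)}, with equality if and only if φ = c·ψ_j for some index j and some complex number c of modulus 1. In particular, up to global phases the only maximizers of the product are the SIC vectors themselves. -/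
/-!
The `d²` rank-one projectors `Pⱼ = ψⱼ ψⱼ*` have Hilbert–Schmidt Gram matrix `1` on and
`1 / (d + 1)` off the diagonal, which is invertible, so they form a basis of the `d × d` matrices.
Expanding `φ φ*` in this basis and taking its trace and its Hilbert–Schmidt norm gives the moments
`∑ xⱼ = d` and `∑ xⱼ² = 2d / (d + 1)` of `xⱼ = |⟨φ, ψⱼ⟩|²`.

For `yⱼ = (d + 1) xⱼ ∈ (0, d + 1]` these read `∑ (yⱼ - 1) = d` and `∑ (yⱼ - 1)² = d²`. The function
`g y = (y - 1) - β (y - 1)² - log y`, with `β` chosen so that `g (d + 1) = 0 = g 1`, is positive on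
`(0, d + 1]` away from its two zeros, hence `∑ log yⱼ = d - β d² - ∑ g yⱼ ≤ log (d + 1)`, which is
the bound. Equality forces every `yⱼ` into `{1, d + 1}`; the first moment rules out `yⱼ = 1` for
all `j`, and `|⟨φ, ψⱼ⟩| = 1` is the equality case of Cauchy–Schwarz.
-/

open scoped BigOperators

open Finset
open scoped InnerProductSpace ComplexConjugate

section EquiangularFamily

variable {𝕜 E ι : Type*} [RCLike 𝕜] [NormedAddCommGroup E] [InnerProductSpace 𝕜 E] [Fintype ι]
  [DecidableEq ι] {v : ι → E} {t : 𝕜}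

lemma inner_sum_smul_of_inner_eq_ite (hv : ∀ j k, ⟪v j, v k⟫_𝕜 = if j = k then 1 else t)
    (c : ι → 𝕜) (k : ι) : ⟪v k, ∑ j, c j • v j⟫_𝕜 = (1 - t) * c k + t * ∑ j, c j := by
  have hite : ∀ j, c j * (if k = j then 1 else t) = t * c j + if k = j then (1 - t) * c j else 0 :=
    fun j => by split_ifs <;> ring
  simp only [inner_sum, inner_smul_right, hv, hite, sum_add_distrib, sum_ite_eq, mem_univ,
    if_true, mul_sum]
  ring

lemma linearIndependent_of_inner_eq_ite (hv : ∀ j k, ⟪v j, v k⟫_𝕜 = if j = k then 1 else t)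
    (ht : t ≠ 1) (hcard : 1 - t + Fintype.card ι * t ≠ 0) : LinearIndependent 𝕜 v := by
  rw [Fintype.linearIndependent_iff]
  intro g hg
  have hk : ∀ k, (1 - t) * g k + t * ∑ j, g j = 0 := fun k => by
    rw [← inner_sum_smul_of_inner_eq_ite hv, hg, inner_zero_right]
  have hsum : ∑ j, g j = 0 := by
    have := Finset.sum_eq_zero (s := univ) fun k _ => hk k
    rw [sum_add_distrib, ← mul_sum, sum_const, card_univ, nsmul_eq_mul] at this
    have hmul : (1 - t + Fintype.card ι * t) * ∑ j, g j = 0 := by linear_combination this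
    exact (mul_eq_zero.1 hmul).resolve_left hcard
  intro k
  simpa [hsum, sub_eq_zero, ht.symm] using hk k

lemma exists_sum_smul_eq_of_inner_eq_ite [FiniteDimensional 𝕜 E]
    (hv : ∀ j k, ⟪v j, v k⟫_𝕜 = if j = k then 1 else t) (ht : t ≠ 1)
    (hcard : 1 - t + Fintype.card ι * t ≠ 0) (hdim : Fintype.card ι = Module.finrank 𝕜 E)
    (w : E) : ∃ c : ι → 𝕜, ∑ j, c j • v j = w := by
  have hspan := (linearIndependent_of_inner_eq_ite hv ht hcard).span_eq_top_of_card_eq_finrank' hdim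
  exact (Submodule.mem_span_range_iff_exists_fun 𝕜).1 (hspan ▸ Submodule.mem_top)

end EquiangularFamily

section UnitVectors

variable {d : ℕ} {v w : Fin d → ℂ}

lemma inp_eq_inner (v w : Fin d → ℂ) :
    inp v w = ⟪(WithLp.toLp 2 v : EuclideanSpace ℂ (Fin d)), WithLp.toLp 2 w⟫_ℂ := by
  simp only [inp, PiLp.inner_apply, RCLike.inner_apply, mul_comm]

lemma norm_toLp_eq_one (hv : inp v v = 1) :
    ‖(WithLp.toLp 2 v : EuclideanSpace ℂ (Fin d))‖ = 1 := by
  have h := inner_self_eq_norm_sq_to_K (𝕜 := ℂ) (WithLp.toLp 2 v : EuclideanSpace ℂ (Fin d))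
  rw [← inp_eq_inner, hv] at h
  refine (pow_eq_one_iff_of_nonneg (norm_nonneg _) two_ne_zero).1 (Complex.ofReal_eq_one.1 ?_)
  push_cast
  exact h.symm

lemma norm_inp_comm (v w : Fin d → ℂ) : ‖inp v w‖ = ‖inp w v‖ := by
  rw [inp_eq_inner, inp_eq_inner, norm_inner_symm]

lemma norm_inp_smul_left (c : ℂ) (v w : Fin d → ℂ) : ‖inp (c • v) w‖ = ‖c‖ * ‖inp v w‖ := by
  rw [inp_eq_inner, inp_eq_inner, WithLp.toLp_smul, inner_smul_left, norm_mul, RCLike.norm_conj]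

lemma norm_inp_le_one (hv : inp v v = 1) (hw : inp w w = 1) : ‖inp v w‖ ≤ 1 := by
  rw [inp_eq_inner]
  simpa [norm_toLp_eq_one hv, norm_toLp_eq_one hw] using
    norm_inner_le_norm (𝕜 := ℂ) (WithLp.toLp 2 v : EuclideanSpace ℂ (Fin d)) (WithLp.toLp 2 w)

lemma exists_eq_smul_of_norm_inp_eq_one (hv : inp v v = 1) (hw : inp w w = 1)
    (h : ‖inp v w‖ = 1) : ∃ c : ℂ, ‖c‖ = 1 ∧ v = c • w := by
  set x : EuclideanSpace ℂ (Fin d) := WithLp.toLp 2 v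
  set y : EuclideanSpace ℂ (Fin d) := WithLp.toLp 2 w
  have hx : ‖x‖ = 1 := norm_toLp_eq_one hv
  have hy : ‖y‖ = 1 := norm_toLp_eq_one hw
  have hyx : ‖⟪y, x⟫_ℂ‖ = ‖y‖ * ‖x‖ := by
    rw [norm_inner_symm, ← inp_eq_inner, h, hx, hy, one_mul]
  obtain ⟨c, -, hc⟩ := (norm_inner_eq_norm_iff (norm_ne_zero_iff.1 (by simp [hy]))
    (norm_ne_zero_iff.1 (by simp [hx]))).1 hyx
  refine ⟨c, by simpa [hx, hy, norm_smul] using (congrArg norm hc).symm, ?_⟩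
  exact WithLp.toLp_injective 2 (by rw [WithLp.toLp_smul]; exact hc)

end UnitVectors

/-- The rank-one matrix `v v*`, as a vector of the space of `d × d` matrices with the
Hilbert–Schmidt inner product `⟪A, B⟫ = tr (A* B)`. -/
noncomputable def outer {d : ℕ} (v : Fin d → ℂ) : EuclideanSpace ℂ (Fin d × Fin d) :=
  WithLp.toLp 2 fun p => v p.1 * conj (v p.2)

noncomputable def diagSum {d : ℕ} : EuclideanSpace ℂ (Fin d × Fin d) →L[ℂ] ℂ :=
  ∑ a, EuclideanSpace.proj (a, a)

lemma inner_outer {d : ℕ} (v w : Fin d → ℂ) :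
    ⟪outer v, outer w⟫_ℂ = (‖inp v w‖ : ℂ) ^ 2 := by
  rw [← Complex.mul_conj', inp, map_sum, sum_mul_sum, PiLp.inner_apply, Fintype.sum_prod_type]
  refine sum_congr rfl fun a _ => sum_congr rfl fun b _ => ?_
  simp only [outer, PiLp.toLp_apply, RCLike.inner_apply, map_mul, Complex.conj_conj]
  ring

lemma diagSum_outer {d : ℕ} (v : Fin d → ℂ) : diagSum (outer v) = inp v v := by
  simp [diagSum, outer, inp, mul_comm]

section SIC

variable {d : ℕ} {ψ : Fin (d ^ 2) → Fin d → ℂ}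

lemma inner_outer_of_sic (hψ : ∀ j, inp (ψ j) (ψ j) = 1)
    (hSIC : ∀ j k, j ≠ k → ‖inp (ψ j) (ψ k)‖ ^ 2 = 1 / (d + 1)) (j k : Fin (d ^ 2)) :
    ⟪outer (ψ j), outer (ψ k)⟫_ℂ = if j = k then 1 else 1 / ((d : ℂ) + 1) := by
  rw [inner_outer]
  split_ifs with hjk
  · simp [hjk, hψ]
  · have h := congrArg (fun r : ℝ => (r : ℂ)) (hSIC j k hjk)
    push_cast at h
    exact h

lemma exists_sum_smul_outer_eq_of_sic (hd : 1 ≤ d) (hψ : ∀ j, inp (ψ j) (ψ j) = 1)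
    (hSIC : ∀ j k, j ≠ k → ‖inp (ψ j) (ψ k)‖ ^ 2 = 1 / (d + 1))
    (A : EuclideanSpace ℂ (Fin d × Fin d)) :
    ∃ c : Fin (d ^ 2) → ℂ, ∑ j, c j • outer (ψ j) = A := by
  have hd0 : (d : ℂ) ≠ 0 := Nat.cast_ne_zero.2 (by omega)
  have hD0 : (d : ℂ) + 1 ≠ 0 := Nat.cast_add_one_ne_zero d
  refine exists_sum_smul_eq_of_inner_eq_ite (inner_outer_of_sic hψ hSIC) ?_ ?_ ?_ A
  · rw [ne_eq, div_eq_one_iff_eq hD0]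
    intro h
    exact hd0 (by linear_combination -h)
  · have h : 1 - 1 / ((d : ℂ) + 1) + ((d ^ 2 : ℕ) : ℂ) * (1 / ((d : ℂ) + 1)) = d := by
      field_simp
      push_cast
      ring
    rwa [Fintype.card_fin, h]
  · simp [sq]

theorem sic_moments (hd : 1 ≤ d) (hψ : ∀ j, inp (ψ j) (ψ j) = 1)
    (hSIC : ∀ j k, j ≠ k → ‖inp (ψ j) (ψ k)‖ ^ 2 = 1 / (d + 1))
    (φ : Fin d → ℂ) (hφ : inp φ φ = 1) :
    ∑ j, ‖inp φ (ψ j)‖ ^ 2 = d ∧ ∑ j, (‖inp φ (ψ j)‖ ^ 2) ^ 2 = 2 * d / (d + 1) := by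
  obtain ⟨c, hc⟩ := exists_sum_smul_outer_eq_of_sic hd hψ hSIC (outer φ)
  set x : Fin (d ^ 2) → ℂ := fun j => (‖inp φ (ψ j)‖ : ℂ) ^ 2
  have hcx : ∀ k, x k = (1 - 1 / (d + 1)) * c k + 1 / (d + 1) * ∑ j, c j := fun k => by
    rw [← inner_sum_smul_of_inner_eq_ite (inner_outer_of_sic hψ hSIC), hc, inner_outer,
      norm_inp_comm]
  have hc1 : ∑ j, c j = 1 := by
    simpa [map_sum, diagSum_outer, hψ, hφ] using congrArg diagSum hc
  have hcx1 : ∑ j, c j * x j = 1 := by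
    have h : ⟪outer φ, ∑ j, c j • outer (ψ j)⟫_ℂ = ∑ j, c j * x j := by
      simp only [inner_sum, inner_smul_right, inner_outer, x]
    rw [hc, inner_outer, hφ] at h
    simpa using h.symm
  have hD0 : (d : ℂ) + 1 ≠ 0 := Nat.cast_add_one_ne_zero d
  have hdx : ∀ k, ((d : ℂ) + 1) * x k = d * c k + 1 := fun k => by
    rw [hcx k, hc1]
    field_simp
    ring
  have hsum : ∑ j, x j = d := by
    refine mul_left_cancel₀ hD0 ?_
    rw [mul_sum, sum_congr rfl fun k _ => hdx k, sum_add_distrib, ← mul_sum, hc1, sum_const,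
      card_univ, Fintype.card_fin, nsmul_eq_mul]
    push_cast
    ring
  have hsq : ∑ j, x j ^ 2 = 2 * d / (d + 1) := by
    rw [eq_div_iff hD0, sum_mul]
    calc ∑ j, x j ^ 2 * (d + 1) = ∑ j, x j * (d * c j + 1) :=
          sum_congr rfl fun j _ => by rw [← hdx]; ring
      _ = d * ∑ j, c j * x j + ∑ j, x j := by
          rw [mul_sum, ← sum_add_distrib]
          exact sum_congr rfl fun j _ => by ring
      _ = 2 * d := by rw [hcx1, hsum]; ring
  constructor <;> apply Complex.ofReal_injective <;> push_cast
  · exact hsum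
  · exact hsq

lemma prod_norm_inp_sq_of_sic (hψ : ∀ j, inp (ψ j) (ψ j) = 1)
    (hSIC : ∀ j k, j ≠ k → ‖inp (ψ j) (ψ k)‖ ^ 2 = 1 / (d + 1)) (j : Fin (d ^ 2)) :
    ∏ k, ‖inp (ψ j) (ψ k)‖ ^ 2 = (1 / ((d : ℝ) + 1)) ^ (d ^ 2 - 1) := by
  rw [← mul_prod_erase univ _ (mem_univ j), hψ j,
    prod_congr rfl fun k hk => hSIC j k (ne_of_mem_erase hk).symm, prod_const,
    card_erase_of_mem (mem_univ j), card_univ, Fintype.card_fin]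
  simp

end SIC

section LogGap

open Set

noncomputable def logGap (β y : ℝ) : ℝ := y - 1 - β * (y - 1) ^ 2 - Real.log y

lemma logGap_one (β : ℝ) : logGap β 1 = 0 := by simp [logGap]

lemma hasDerivAt_logGap (β : ℝ) {y : ℝ} (hy : y ≠ 0) :
    HasDerivAt (logGap β) ((y - 1) * (1 - 2 * β * y) / y) y := by
  have hlin : HasDerivAt (fun y : ℝ => y - 1) 1 y := (hasDerivAt_id y).sub_const 1
  have h := (hlin.fun_sub ((hlin.fun_pow 2).const_mul β)).fun_sub (Real.hasDerivAt_log hy)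
  exact h.congr_deriv (by field_simp; ring)

lemma continuousOn_logGap (β : ℝ) {a b : ℝ} (ha : 0 < a) : ContinuousOn (logGap β) (Icc a b) :=
  fun _ hx => (hasDerivAt_logGap β (ha.trans_le hx.1).ne').continuousAt.continuousWithinAt

lemma strictMonoOn_logGap {β a b : ℝ} (ha : 0 < a)
    (h : ∀ x ∈ Ioo a b, 0 < (x - 1) * (1 - 2 * β * x)) : StrictMonoOn (logGap β) (Icc a b) := by
  refine strictMonoOn_of_deriv_pos (convex_Icc a b) (continuousOn_logGap β ha) fun x hx => ?_
  rw [interior_Icc] at hx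
  have hx0 : 0 < x := ha.trans hx.1
  rw [(hasDerivAt_logGap β hx0.ne').deriv]
  exact div_pos (h x hx) hx0

lemma strictAntiOn_logGap {β a b : ℝ} (ha : 0 < a)
    (h : ∀ x ∈ Ioo a b, (x - 1) * (1 - 2 * β * x) < 0) : StrictAntiOn (logGap β) (Icc a b) := by
  refine strictAntiOn_of_deriv_neg (convex_Icc a b) (continuousOn_logGap β ha) fun x hx => ?_
  rw [interior_Icc] at hx
  have hx0 : 0 < x := ha.trans hx.1
  rw [(hasDerivAt_logGap β hx0.ne').deriv]
  exact div_neg_of_neg_of_pos (h x hx) hx0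

lemma logGap_pos {β c y : ℝ} (hβ : 2 * β ≤ 1) (hc : logGap β c = 0) (hy : 0 < y) (hyc : y ≤ c)
    (hy1 : y ≠ 1) (hyc' : y ≠ c) : 0 < logGap β y := by
  rcases hy1.lt_or_gt with hy1 | hy1
  · have := strictAntiOn_logGap (β := β) hy (fun x hx => by
      nlinarith [mul_nonneg (sub_nonneg.2 hβ) (hy.trans hx.1).le, hx.2])
      ⟨le_rfl, hy1.le⟩ ⟨hy1.le, le_rfl⟩ hy1
    rwa [logGap_one] at this
  have hc1 : 1 < c := hy1.trans (hyc.lt_of_ne hyc')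
  have hβ0 : 0 < β := by
    have := Real.log_lt_sub_one_of_pos (by linarith) hc1.ne'
    simp only [logGap] at hc
    nlinarith
  rcases le_or_gt (2 * β * y) 1 with hβy | hβy
  · have := strictMonoOn_logGap (β := β) zero_lt_one (fun x hx => by
      nlinarith [mul_lt_mul_of_pos_left hx.2 hβ0, hx.1])
      ⟨le_rfl, hy1.le⟩ ⟨hy1.le, le_rfl⟩ hy1
    rwa [logGap_one] at this
  · have hyc : y < c := hyc.lt_of_ne hyc'
    have := strictAntiOn_logGap (β := β) hy (fun x hx => by
      nlinarith [mul_lt_mul_of_pos_left hx.1 hβ0, hx.1])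
      ⟨le_rfl, hyc.le⟩ ⟨hyc.le, le_rfl⟩ hyc
    rwa [hc] at this

lemma logGap_nonneg {β c y : ℝ} (hβ : 2 * β ≤ 1) (hc : logGap β c = 0) (hy : 0 < y)
    (hyc : y ≤ c) : 0 ≤ logGap β y := by
  by_cases hy1 : y = 1
  · rw [hy1, logGap_one]
  by_cases hyc' : y = c
  · rw [hyc', hc]
  exact (logGap_pos hβ hc hy hyc hy1 hyc').le

lemma two_mul_sub_log_add_one_le_sq {d : ℝ} (hd : 1 ≤ d) :
    2 * (d - Real.log (d + 1)) ≤ d ^ 2 := by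
  have hlog := Real.one_sub_inv_le_log_of_pos (x := d + 1) (by linarith)
  have hinv : 1 - (d + 1)⁻¹ = d / (d + 1) := by field_simp; ring
  have hd' : d - d ^ 2 / 2 ≤ d / (d + 1) := by
    rw [le_div_iff₀ (by linarith)]
    nlinarith
  linarith

theorem prod_le_of_sum_eq_of_sum_sq_eq {ι : Type*} [Fintype ι] {d : ℕ} (hd : 1 ≤ d)
    (hι : Fintype.card ι = d ^ 2) {x : ι → ℝ} (hx0 : ∀ j, 0 ≤ x j) (hx1 : ∀ j, x j ≤ 1)
    (hsum : ∑ j, x j = d) (hsq : ∑ j, x j ^ 2 = 2 * d / (d + 1)) :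
    ∏ j, x j ≤ (1 / ((d : ℝ) + 1)) ^ (d ^ 2 - 1) ∧
      (∏ j, x j = (1 / ((d : ℝ) + 1)) ^ (d ^ 2 - 1) → ∃ j, x j = 1) := by
  set D : ℝ := d + 1 with hD
  have hd1 : (1 : ℝ) ≤ d := by exact_mod_cast hd
  have hD0 : 0 < D := by linarith
  have hbound : 0 < (1 / D) ^ (d ^ 2 - 1) := by positivity
  by_cases hzero : ∃ j, x j = 0
  · obtain ⟨j, hj⟩ := hzero
    rw [Finset.prod_eq_zero (Finset.mem_univ j) hj]
    exact ⟨hbound.le, fun h => absurd h hbound.ne⟩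
  push Not at hzero
  have hxpos : ∀ j, 0 < x j := fun j => (hx0 j).lt_of_ne' (hzero j)
  set β : ℝ := (d - Real.log D) / d ^ 2 with hβ
  have hβ2 : 2 * β ≤ 1 := by
    rw [hβ, mul_div_assoc', div_le_one (by positivity)]
    exact two_mul_sub_log_add_one_le_sq hd1
  have hβD : logGap β D = 0 := by
    simp only [logGap, hβ, hD]
    field_simp
    ring
  have hyD : ∀ j, D * x j ≤ D := fun j => mul_le_of_le_one_right hD0.le (hx1 j)
  have hgap : ∀ j, 0 ≤ logGap β (D * x j) := fun j =>
    logGap_nonneg hβ2 hβD (mul_pos hD0 (hxpos j)) (hyD j)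
  have hlog : Real.log (∏ j, x j) =
      Real.log ((1 / D) ^ (d ^ 2 - 1)) - ∑ j, logGap β (D * x j) := by
    have hterm : ∀ j, Real.log (x j) = (D + 2 * β * D) * x j - β * D ^ 2 * x j ^ 2
        - (1 + β + Real.log D) - logGap β (D * x j) := by
      intro j
      simp only [logGap]
      rw [Real.log_mul hD0.ne' (hzero j)]
      ring
    rw [Real.log_prod (fun j _ => hzero j), Finset.sum_congr rfl (fun j _ => hterm j)]
    simp only [Finset.sum_sub_distrib, ← Finset.mul_sum, Finset.sum_const, Finset.card_univ, hι,
      hsum, hsq, nsmul_eq_mul, Real.log_pow, one_div, Real.log_inv]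
    rw [Nat.cast_sub (Nat.one_le_pow _ _ hd), hβ, hD]
    push_cast
    field_simp
    ring
  have hprod : 0 < ∏ j, x j := Finset.prod_pos fun j _ => hxpos j
  refine ⟨?_, fun heq => ?_⟩
  · rw [← Real.log_le_log_iff hprod hbound, hlog]
    linarith [Finset.sum_nonneg fun j (_ : j ∈ Finset.univ) => hgap j]
  have hgap0 : ∑ j, logGap β (D * x j) = 0 := by
    have := congrArg Real.log heq
    linarith
  rw [Finset.sum_eq_zero_iff_of_nonneg fun j _ => hgap j] at hgap0
  by_contra! hne
  have hxD : ∀ j, x j = 1 / D := by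
    intro j
    by_contra hj
    refine (logGap_pos hβ2 hβD (mul_pos hD0 (hxpos j)) (hyD j) ?_ ?_).ne'
      (hgap0 j (Finset.mem_univ j))
    · intro h
      exact hj (by rw [eq_div_iff hD0.ne']; linarith)
    · intro h
      exact hne j (mul_left_cancel₀ hD0.ne' (h.trans (mul_one D).symm))
  simp only [hxD, Finset.sum_const, Finset.card_univ, hι, nsmul_eq_mul] at hsum
  field_simp at hsum
  push_cast at hsum
  nlinarith

end LogGap

theorem stmt15 (d : ℕ) (hd : 1 ≤ d)
    (ψ : Fin (d ^ 2) → (Fin d → ℂ)) (hψ : ∀ j, inp (ψ j) (ψ j) = 1)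
    (hSIC : ∀ j k, j ≠ k →
      ‖inp (ψ j) (ψ k)‖ ^ 2 = 1 / (d + 1))
    (φ : Fin d → ℂ) (hφ : inp φ φ = 1) :
    ∏ j, ‖inp φ (ψ j)‖ ^ 2 ≤ (1 / ((d : ℝ) + 1)) ^ (d ^ 2 - 1) ∧
      (∏ j, ‖inp φ (ψ j)‖ ^ 2 = (1 / ((d : ℝ) + 1)) ^ (d ^ 2 - 1) ↔
        ∃ j, ∃ c : ℂ, ‖c‖ = 1 ∧ φ = c • ψ j) := by
  obtain ⟨hsum, hsq⟩ := sic_moments hd hψ hSIC φ hφ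
  obtain ⟨hle, hmax⟩ := prod_le_of_sum_eq_of_sum_sq_eq hd (Fintype.card_fin _)
    (fun j => sq_nonneg _) (fun j => pow_le_one₀ (norm_nonneg _) (norm_inp_le_one hφ (hψ j)))
    hsum hsq
  refine ⟨hle, fun heq => ?_, ?_⟩
  · obtain ⟨j, hj⟩ := hmax heq
    exact ⟨j, exists_eq_smul_of_norm_inp_eq_one hφ (hψ j)
      ((pow_eq_one_iff_of_nonneg (norm_nonneg _) two_ne_zero).1 hj)⟩
  · rintro ⟨j, c, hc, rfl⟩
    simp only [norm_inp_smul_left, hc, one_mul]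
    exact prod_norm_inp_sq_of_sic hψ hSIC j
end
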